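/- arXiv:0907.5527 — 5 statements merged into one kernel-verified Lean document; each statement's English description precedes it below -/
import Mathlib

section
/- Let n ≥ 1 and let p be a finite sequence of natural numbers of length ℓ. Then every >lexₙ-descending chain starting at p, i.e. every sequence p = p₀ >lexₙ p₁ >lexₙ ⋯ >lexₙ p_m, has length m ≤ Ack(2·ℓ + 8, mc(p) + n). -/
/-!
Along a `>lexₙ`-chain the lengths never increase and the maximal entry at most doubles (plus `n`)
per step. Prefixing every list with its length and padding it with zeros to length `ℓ + 1` turns
the chain into a lexicographically descending chain of lists of one fixed length `L` whose `i`-th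
entry is bounded by `2 ^ i * C`. Such chains are bounded by induction on `L`: heads never increase,
between two head drops the tails form a chain of length `L - 1`, and after a drop at step `k` the
argument restarts with scale `2 ^ (k + 1) * C`. As the head is at most `C`, this composes at most
`C + 1` bounds of the form `Ack(2L + 4, ·)`, giving `Ack(2L + 5, 2C)`; each restart with a larger
scale is paid for by `2 ^ (a + 2) * C + a + 1 ≤ Ack(s + 1, 2C)` for `a = Ack(s, 2C)`.
-/

/-- The maximal entry of a finite sequence of naturals (`0` for the empty sequence). -/
def mc (p : List ℕ) : ℕ := p.foldr max 0

/-- `lexGt p q` iff `|p| > |q|`, or `|p| = |q|` and there is an index `i` with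
`(p)_j = (q)_j` for all `j < i` and `(p)_i > (q)_i`. -/
def lexGt (p q : List ℕ) : Prop :=
  q.length < p.length ∨
    (p.length = q.length ∧
      ∃ i < p.length, (∀ j < i, p.getD j 0 = q.getD j 0) ∧ q.getD i 0 < p.getD i 0)

/-- The approximation `>lexₙ`:  `p >lexₙ q` iff `p >lex q` and `2·mc(p) + n ≥ mc(q)`. -/
def lexGtApprox (n : ℕ) (p q : List ℕ) : Prop :=
  lexGt p q ∧ mc q ≤ 2 * mc p + n

theorem ack_add_right_le_ack_add_left (m n k : ℕ) : ack m (n + k) ≤ ack (m + k) n := by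
  induction k generalizing n with
  | zero => rfl
  | succ k ih =>
    calc ack m (n + (k + 1)) = ack m (n + 1 + k) := by rw [Nat.add_right_comm, Nat.add_assoc]
      _ ≤ ack (m + k) (n + 1) := ih (n + 1)
      _ ≤ ack (m + (k + 1)) n := ack_succ_right_le_ack_succ_left _ _

theorem ack_succ_left_eq_iterate (m n : ℕ) : ack (m + 1) n = (ack m)^[n + 1] 1 := by
  induction n with
  | zero => simp [ack_succ_zero]
  | succ n ih => rw [ack_succ_succ, ih, ← Function.iterate_succ_apply' (ack m)]

theorem iterate_ack_le_iterate_ack {s i j x y : ℕ} (hij : i ≤ j) (hxy : x ≤ y) :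
    (ack s)^[i] x ≤ (ack s)^[j] y :=
  (Function.monotone_iterate_of_id_le (fun x => (lt_ack_right s x).le) hij x).trans
    ((ack_mono_right s).iterate j hxy)

theorem ack_three_ack_two_le {t : ℕ} (ht : 2 ≤ t) (n : ℕ) :
    ack 3 (ack 2 (ack (t + 1) (n + 2))) ≤ ack (t + 2) (n + 2) := by
  have hgap : n + 3 ≤ ack (t + 2) n := by have := add_lt_ack (t + 2) n; omega
  calc ack 3 (ack 2 (ack (t + 1) (n + 2)))
      ≤ ack (t + 1) (ack t (ack (t + 1) (n + 2))) := ack_le_ack (by omega)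
        (ack_mono_left _ (by omega))
    _ = ack (t + 1) (ack (t + 1) (n + 3)) := by rw [← ack_succ_succ]
    _ ≤ ack (t + 1) (ack (t + 1) (ack (t + 2) n)) :=
        ack_mono_right _ (ack_mono_right _ hgap)
    _ = ack (t + 2) (n + 2) := by rw [← ack_succ_succ, ← ack_succ_succ]

theorem two_pow_mul_add_le_ack_succ {s C : ℕ} (hs : 3 ≤ s) (hC : 1 ≤ C) :
    2 ^ (ack s (2 * C) + 2) * C + ack s (2 * C) + 1 ≤ ack (s + 1) (2 * C) := by
  obtain ⟨t, rfl⟩ : ∃ t, s = t + 1 := ⟨s - 1, by omega⟩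
  obtain ⟨c, hc⟩ : ∃ c, 2 * C = c + 2 := ⟨2 * C - 2, by omega⟩
  set a := ack (t + 1) (2 * C)
  have hCa : C < 2 ^ a := (show C ≤ a from (lt_ack_right _ _).le.trans' (by omega)).trans_lt
    Nat.lt_two_pow_self
  have ha : a < 2 ^ a := Nat.lt_two_pow_self
  have hbound := ack_three_ack_two_le (t := t) (by omega) c
  rw [← hc, ack_two, ack_three] at hbound
  have hpow : 2 ^ (2 * a + 3 + 3) = 64 * (2 ^ a * 2 ^ a) := by ring
  have hpow' : 2 ^ (a + 2) = 4 * 2 ^ a := by ring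
  rw [hpow] at hbound
  rw [hpow']
  have : 4 * 2 ^ a * C + a + 4 ≤ 64 * (2 ^ a * 2 ^ a) := by nlinarith
  exact le_trans (by omega) hbound

theorem mc_cons (a : ℕ) (l : List ℕ) : mc (a :: l) = max a (mc l) := rfl

theorem headD_le_mc (p : List ℕ) : p.headD 0 ≤ mc p := by
  cases p <;> simp [mc_cons]

theorem mc_tail_le (p : List ℕ) : mc p.tail ≤ mc p := by
  cases p <;> simp [mc_cons]

theorem mc_append_replicate_zero (q : List ℕ) (k : ℕ) :
    mc (q ++ List.replicate k 0) = mc q := by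
  induction q with
  | nil => induction k <;> simp_all [mc, List.replicate_succ]
  | cons a q ih => simp only [List.cons_append, mc_cons, ih]

theorem lexGt.length_le {p q : List ℕ} (h : lexGt p q) : q.length ≤ p.length := by
  rcases h with h | ⟨h, _⟩ <;> omega

theorem lexGt.length_pos {p q : List ℕ} (h : lexGt p q) : 0 < p.length := by
  rcases h with h | ⟨_, i, hi, _⟩ <;> omega

theorem lexGt.headD_lt_or_tail {p q : List ℕ} (h : lexGt p q) (hpq : p.length = q.length) :
    q.headD 0 < p.headD 0 ∨ p.headD 0 = q.headD 0 ∧ lexGt p.tail q.tail := by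
  rcases h with h | ⟨-, i, hi, hbelow, hlt⟩
  · omega
  cases p with
  | nil => simp at hi
  | cons a p =>
  cases q with
  | nil => simp at hpq
  | cons b q =>
  cases i with
  | zero => exact Or.inl hlt
  | succ i =>
    simp only [List.length_cons, Nat.add_right_cancel_iff] at hpq hi
    exact Or.inr ⟨hbelow 0 i.succ_pos,
      Or.inr ⟨hpq, i, by simpa using hi, fun j hj => hbelow (j + 1) (by omega), hlt⟩⟩

structure IsBoundedChain (L C m : ℕ) (d : ℕ → List ℕ) : Prop where
  length_eq : ∀ i ≤ m, (d i).length = L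
  mc_le : ∀ i ≤ m, mc (d i) ≤ 2 ^ i * C
  lexGt_succ : ∀ i < m, lexGt (d i) (d (i + 1))

namespace IsBoundedChain

variable {L C m : ℕ} {d : ℕ → List ℕ}

theorem of_le (h : IsBoundedChain L C m d) {k : ℕ} (hk : k ≤ m) : IsBoundedChain L C k d :=
  ⟨fun i hi => h.length_eq i (hi.trans hk), fun i hi => h.mc_le i (hi.trans hk),
    fun i hi => h.lexGt_succ i (hi.trans_le hk)⟩

theorem shift (h : IsBoundedChain L C m d) {k : ℕ} (hk : k ≤ m) :
    IsBoundedChain L (2 ^ k * C) (m - k) (fun i => d (k + i)) where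
  length_eq i hi := h.length_eq (k + i) (by omega)
  mc_le i hi := (h.mc_le (k + i) (by omega)).trans_eq (by ring)
  lexGt_succ i hi := h.lexGt_succ (k + i) (by omega)

theorem tail_of_headD_stable (h : IsBoundedChain (L + 1) C m d)
    (hstable : ∀ i < m, ¬(d (i + 1)).headD 0 < (d i).headD 0) :
    IsBoundedChain L C m (fun i => (d i).tail) ∧ (d m).headD 0 = (d 0).headD 0 := by
  have hstep (i) (hi : i < m) :
      (d i).headD 0 = (d (i + 1)).headD 0 ∧ lexGt (d i).tail (d (i + 1)).tail :=
    ((h.lexGt_succ i hi).headD_lt_or_tail (by rw [h.length_eq i hi.le, h.length_eq (i + 1) hi])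
      ).resolve_left (hstable i hi)
  refine ⟨⟨fun i hi => ?_, fun i hi => (mc_tail_le _).trans (h.mc_le i hi),
    fun i hi => (hstep i hi).2⟩, ?_⟩
  · simp [h.length_eq i hi]
  · suffices ∀ i ≤ m, (d i).headD 0 = (d 0).headD 0 from this m le_rfl
    intro i hi
    induction i with
    | zero => rfl
    | succ i ih => rw [← (hstep i hi).1, ih (by omega)]

theorem tail_or_headD_drop (h : IsBoundedChain (L + 1) C m d) :
    IsBoundedChain L C m (fun i => (d i).tail) ∨
      ∃ k < m, IsBoundedChain L C k (fun i => (d i).tail) ∧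
        IsBoundedChain (L + 1) (2 ^ (k + 1) * C) (m - (k + 1)) (fun i => d (k + 1 + i)) ∧
        (d (k + 1)).headD 0 < (d 0).headD 0 := by
  classical
  by_cases hdrop : ∃ k < m, (d (k + 1)).headD 0 < (d k).headD 0
  · obtain ⟨hkm, hlt⟩ := Nat.find_spec hdrop
    set k := Nat.find hdrop
    obtain ⟨htail, hhead⟩ := (h.of_le hkm.le).tail_of_headD_stable
      fun i hi hlt' => Nat.find_min hdrop hi ⟨hi.trans hkm, hlt'⟩
    exact Or.inr ⟨k, hkm, htail, h.shift hkm, hhead ▸ hlt⟩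
  · push Not at hdrop
    exact Or.inl (h.tail_of_headD_stable fun i hi => (hdrop i hi).not_gt).1

theorem le_iterate_ack_headD_succ {s : ℕ} (hs : 3 ≤ s)
    (hL : ∀ C m d, IsBoundedChain L C m d → 1 ≤ C → m ≤ ack s (2 * C))
    (h : IsBoundedChain (L + 1) C m d) (hC : 1 ≤ C) :
    m ≤ (ack (s + 1))^[(d 0).headD 0 + 1] (2 * C) := by
  obtain ⟨x, hx⟩ : ∃ x, (d 0).headD 0 = x := ⟨_, rfl⟩
  rw [hx]
  induction x using Nat.strong_induction_on generalizing C m d with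
  | _ x ih =>
  rcases h.tail_or_headD_drop with htail | ⟨k, hkm, hprefix, hsuffix, hdrop⟩
  · calc m ≤ ack s (2 * C) := hL C m _ htail hC
      _ ≤ (ack (s + 1))^[1] (2 * C) := ack_mono_left _ (by omega)
      _ ≤ (ack (s + 1))^[x + 1] (2 * C) := iterate_ack_le_iterate_ack (by omega) le_rfl
  set a := ack s (2 * C)
  have hka : k ≤ a := hL C k _ hprefix hC
  have hrest := ih ((d (k + 1)).headD 0) (hx ▸ hdrop) hsuffix
    (Nat.one_le_two_pow.trans (Nat.le_mul_of_pos_right _ hC)) rfl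
  have hscale : 2 * (2 ^ (k + 1) * C) ≤ 2 ^ (a + 2) * C := by
    rw [← mul_assoc, ← pow_succ']
    exact Nat.mul_le_mul_right _ (Nat.pow_le_pow_right two_pos (by omega))
  calc m = (k + 1) + (m - (k + 1)) := by omega
    _ ≤ (a + 1) + (ack (s + 1))^[x] (2 ^ (a + 2) * C) :=
        add_le_add (by omega) (hrest.trans (iterate_ack_le_iterate_ack (by omega) hscale))
    _ ≤ (ack (s + 1))^[x] (a + 1 + 2 ^ (a + 2) * C) :=
        ((ack_strictMono_right _).iterate x).add_le_nat _ _
    _ ≤ (ack (s + 1))^[x] (ack (s + 1) (2 * C)) :=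
        (ack_mono_right _).iterate x (by linarith [two_pow_mul_add_le_ack_succ hs hC])
    _ = (ack (s + 1))^[x + 1] (2 * C) := (Function.iterate_succ_apply _ _ _).symm

theorem le_ack (h : IsBoundedChain L C m d) (hC : 1 ≤ C) : m ≤ ack (2 * L + 5) (2 * C) := by
  induction L generalizing C m d with
  | zero =>
    by_contra! hm
    simpa [h.length_eq 0 (Nat.zero_le _)] using (h.lexGt_succ 0 (by omega)).length_pos
  | succ L ih =>
    have hhead : (d 0).headD 0 ≤ C :=
      (headD_le_mc _).trans ((h.mc_le 0 (Nat.zero_le _)).trans_eq (by simp))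
    obtain ⟨c, rfl⟩ : ∃ c, C = c + 1 := ⟨C - 1, by omega⟩
    have hstart : 2 * (c + 1) ≤ (ack (2 * L + 6))^[c + 1] 1 := by
      rw [← ack_succ_left_eq_iterate]
      calc 2 * (c + 1) ≤ 2 * c + 3 := by omega
        _ = ack 2 c := (ack_two c).symm
        _ ≤ ack (2 * L + 6 + 1) c := ack_mono_left c (by omega)
    calc m ≤ (ack (2 * L + 6))^[(d 0).headD 0 + 1] (2 * (c + 1)) :=
          h.le_iterate_ack_headD_succ (by omega) (fun C m d h hC => ih h hC) hC
      _ ≤ (ack (2 * L + 6))^[(c + 2) + (c + 1)] 1 := by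
          rw [Function.iterate_add_apply _ (c + 2)]
          exact iterate_ack_le_iterate_ack (by omega) hstart
      _ = ack (2 * (L + 1) + 5) (2 * (c + 1)) := by
          rw [ack_succ_left_eq_iterate]
          ring_nf

end IsBoundedChain

section Padding

def padWithLength (ℓ : ℕ) (q : List ℕ) : List ℕ :=
  q.length :: (q ++ List.replicate (ℓ - q.length) 0)

variable {ℓ : ℕ} {p q : List ℕ}

theorem length_padWithLength (hq : q.length ≤ ℓ) : (padWithLength ℓ q).length = ℓ + 1 := by
  simp only [padWithLength, List.length_cons, List.length_append, List.length_replicate]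
  omega

theorem mc_padWithLength (ℓ : ℕ) (q : List ℕ) :
    mc (padWithLength ℓ q) = max q.length (mc q) := by
  rw [padWithLength, mc_cons, mc_append_replicate_zero]

theorem getD_padWithLength_succ {j : ℕ} (hj : j < q.length) :
    (padWithLength ℓ q).getD (j + 1) 0 = q.getD j 0 := by
  rw [padWithLength, List.getD_cons_succ, List.getD_append _ _ _ _ hj]

theorem lexGt_padWithLength (h : lexGt p q) (hp : p.length ≤ ℓ) (hq : q.length ≤ ℓ) :
    lexGt (padWithLength ℓ p) (padWithLength ℓ q) := by
  have hlen : (padWithLength ℓ p).length = (padWithLength ℓ q).length := by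
    rw [length_padWithLength hp, length_padWithLength hq]
  rcases h with h | ⟨heq, i, hi, hbelow, hlt⟩
  · exact Or.inr ⟨hlen, 0, by simp [padWithLength], fun j hj => absurd hj j.not_lt_zero, h⟩
  · refine Or.inr ⟨hlen, i + 1, ?_, fun j hj => ?_, ?_⟩
    · simp only [padWithLength, List.length_cons, List.length_append, List.length_replicate]
      omega
    · cases j with
      | zero => exact heq
      | succ j =>
        rw [getD_padWithLength_succ (by omega), getD_padWithLength_succ (by omega)]
        exact hbelow j (by omega)
    · rwa [getD_padWithLength_succ hi, getD_padWithLength_succ (heq ▸ hi)]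

end Padding

section ApproxChain

variable {n m : ℕ} {d : ℕ → List ℕ}

theorem length_le_of_lexGtApprox_chain (hchain : ∀ i < m, lexGtApprox n (d i) (d (i + 1))) :
    ∀ i ≤ m, (d i).length ≤ (d 0).length := by
  intro i hi
  induction i with
  | zero => rfl
  | succ i ih => exact (hchain i hi).1.length_le.trans (ih (by omega))

theorem mc_add_le_of_lexGtApprox_chain (hchain : ∀ i < m, lexGtApprox n (d i) (d (i + 1))) :
    ∀ i ≤ m, mc (d i) + n ≤ 2 ^ i * (mc (d 0) + n) := by
  intro i hi
  induction i with
  | zero => simp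
  | succ i ih =>
    have hstep := (hchain i hi).2
    have hprev := ih (by omega)
    rw [pow_succ]
    linarith

theorem isBoundedChain_padWithLength (hchain : ∀ i < m, lexGtApprox n (d i) (d (i + 1))) :
    IsBoundedChain ((d 0).length + 1) (mc (d 0) + n + (d 0).length) m
      (fun i => padWithLength (d 0).length (d i)) where
  length_eq i hi := length_padWithLength (length_le_of_lexGtApprox_chain hchain i hi)
  mc_le i hi := by
    have hlen := length_le_of_lexGtApprox_chain hchain i hi
    have hmc := mc_add_le_of_lexGtApprox_chain hchain i hi
    have hpow : 1 ≤ 2 ^ i := Nat.one_le_two_pow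
    rw [mc_padWithLength, mul_add]
    refine max_le ?_ ?_ <;> nlinarith
  lexGt_succ i hi := lexGt_padWithLength (hchain i hi).1
    (length_le_of_lexGtApprox_chain hchain i hi.le)
    (length_le_of_lexGtApprox_chain hchain (i + 1) hi)

end ApproxChain

theorem ack_two_mul_add_le_ack {M : ℕ} (hM : 1 ≤ M) (ℓ : ℕ) :
    ack (2 * (ℓ + 1) + 5) (2 * (M + ℓ)) ≤ ack (2 * ℓ + 8) M := by
  obtain ⟨M, rfl⟩ : ∃ M', M = M' + 1 := ⟨M - 1, by omega⟩
  rw [ack_succ_succ]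
  refine ack_mono_right _ ?_
  calc 2 * (M + 1 + ℓ) ≤ ack 2 (M + (2 * ℓ + 6)) := by rw [ack_two]; omega
    _ ≤ ack (2 + (2 * ℓ + 6)) M := ack_add_right_le_ack_add_left _ _ _
    _ = ack (2 * ℓ + 8) M := by ring_nf

/-- For `n ≥ 1` and `p` of length `ℓ`, every `>lexₙ`-descending chain
`p = p₀ >lexₙ p₁ >lexₙ ⋯ >lexₙ p_m` has length `m ≤ Ack(2·ℓ + 8, mc(p) + n)`. -/
theorem lexApprox_chain_le_ack (n : ℕ) (hn : 1 ≤ n) (p : List ℕ) (ℓ : ℕ)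
    (hℓ : p.length = ℓ) (m : ℕ) (d : ℕ → List ℕ) (hd0 : d 0 = p)
    (hchain : ∀ i < m, lexGtApprox n (d i) (d (i + 1))) :
    m ≤ ack (2 * ℓ + 8) (mc p + n) := by
  subst hd0 hℓ
  calc m ≤ ack (2 * ((d 0).length + 1) + 5) (2 * (mc (d 0) + n + (d 0).length)) :=
        (isBoundedChain_padWithLength hchain).le_ack (by omega)
    _ ≤ ack (2 * (d 0).length + 8) (mc (d 0) + n) := ack_two_mul_add_le_ack (by omega) _
end

section
/- For all n ≥ 1 and all m ∈ ℕ, H_{ω^n}(m) ≤ Ack(2n, m). -/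
/-!  Ordinals below `ω^ω` are represented by their Cantor normal forms: a list
`l : List ℕ` represents the ordinal `Σᵢ ω^i · l[i]` (little-endian coefficients). -/

/-- The list represents the ordinal `0`. -/
def isZero (l : List ℕ) : Prop := ∀ a ∈ l, a = 0

instance (l : List ℕ) : Decidable (isZero l) :=
  inferInstanceAs (Decidable (∀ a ∈ l, a = 0))

/-- The fundamental sequence: `fs x l` is (the representation of) `α[x]` where `α` is
represented by `l`.  It implements `0[x] = 0`, `(β+1)[x] = β` and
`(β + ω^{γ+1}·k)[x] = β + ω^{γ+1}·(k−1) + ω^γ·(x+1)`. -/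
def fs (x : ℕ) : List ℕ → List ℕ
  | [] => []
  | (a+1) :: l => a :: l
  | [0] => [0]
  | 0 :: (k+1) :: l => (x+1) :: k :: l
  | 0 :: 0 :: l => 0 :: fs x (0 :: l)
termination_by l => l.length

/-- The ordinal represented by a list of CNF coefficients. -/
noncomputable def toOrd : List ℕ → Ordinal.{0}
  | [] => 0
  | a :: l => Ordinal.omega0 * toOrd l + a

theorem toOrd_fs_lt (x : ℕ) : ∀ l : List ℕ, ¬ isZero l → toOrd (fs x l) < toOrd l := by
  have helper : ∀ (B : Ordinal) (x k : ℕ),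
      Ordinal.omega0 * (B + (k : Ordinal)) + ((x + 1 : ℕ) : Ordinal) <
        Ordinal.omega0 * (B + ((k + 1 : ℕ) : Ordinal)) := by
    intro B x k
    have e : B + ((k + 1 : ℕ) : Ordinal) = Order.succ (B + (k : Ordinal)) := by
      push_cast
      rw [← add_assoc, Ordinal.add_one_eq_succ]
    rw [e, Ordinal.mul_succ]
    exact (add_lt_add_iff_left _).mpr (Ordinal.natCast_lt_omega0 (x + 1))
  intro l
  induction l using fs.induct with
  | case1 =>
      intro h
      exact absurd (by simp [isZero]) h
  | case2 a l =>
      intro _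
      simp only [fs, toOrd]
      exact (add_lt_add_iff_left _).mpr (by exact_mod_cast Nat.lt_succ_self a)
  | case3 =>
      intro h
      exact absurd (by simp [isZero]) h
  | case4 k l =>
      intro _
      simp only [fs, toOrd]
      rw [Nat.cast_zero, add_zero]
      exact helper (Ordinal.omega0 * toOrd l) x k
  | case5 l ih =>
      intro h
      have h' : ¬ isZero (0 :: l) := by
        intro hz
        apply h
        intro a ha
        rcases List.mem_cons.mp ha with rfl | ha'
        · rfl
        · exact hz a ha'
      have ih' := ih h'
      simp only [fs, toOrd, Nat.cast_zero, add_zero] at ih' ⊢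
      first
        | exact mul_lt_mul_of_pos_left ih' Ordinal.omega0_pos
        | exact (Ordinal.mul_lt_mul_iff_left Ordinal.omega0_pos).2 ih'

local instance : WellFoundedRelation Ordinal.{0} := ⟨(· < ·), Ordinal.lt_wf⟩

/-- The Hardy functions: `H_0(x) = x` and `H_α(x) = H_{α[x]}(x+1)` for `α > 0`. -/
def hardy (l : List ℕ) (x : ℕ) : ℕ :=
  if h : isZero l then x else hardy (fs x l) (x + 1)
termination_by toOrd l
decreasing_by exact toOrd_fs_lt x l h

/-! Writing `α = Σᵢ ω^i·aᵢ`, we majorise `H_α` by applying `Ack(2i, ·)` `aᵢ` times, lowest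
exponent first. A single step of the fundamental sequence does not increase this majorant,
because `x + 1 ≤ Ack(2i, x)` and `Ack(2i, ·)^{x+1}(x + 1) ≤ Ack(2i + 2, x)`; so by well-founded
induction along the definition of `H`, the majorant bounds `H_α`. For `α = ω^n` it is
`Ack(2n, ·)` itself. -/

theorem ack_iterate_ack_succ (n i m : ℕ) : (ack n)^[i] (ack (n + 1) m) = ack (n + 1) (m + i) := by
  induction i with
  | zero => rfl
  | succ i ih => rw [Function.iterate_succ_apply', ih, ← ack_succ_succ, add_assoc]

theorem ack_succ_two_mul_add_one_le (n x : ℕ) : ack (n + 1) (2 * x + 1) ≤ ack (n + 2) x := by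
  cases x with
  | zero => rw [ack_succ_zero]
  | succ y =>
    rw [show n + 2 = n + 1 + 1 from rfl, ack_succ_succ (n + 1)]
    refine ack_mono_right _ ?_
    calc 2 * (y + 1) + 1 = ack 2 y := by rw [ack_two]; ring
      _ ≤ ack (n + 2) y := ack_mono_left y (by omega)

theorem ack_iterate_succ_le (n x : ℕ) : (ack n)^[x + 1] (x + 1) ≤ ack (n + 2) x :=
  calc (ack n)^[x + 1] (x + 1) ≤ (ack n)^[x + 1] (ack (n + 1) x) :=
        (ack_mono_right n).iterate _ (lt_ack_right _ _)
    _ = ack (n + 1) (2 * x + 1) := by rw [ack_iterate_ack_succ]; ring_nf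
    _ ≤ ack (n + 2) x := ack_succ_two_mul_add_one_le n x

/-- `k` is the exponent at which the coefficient list `l` starts. -/
def ackBound : ℕ → List ℕ → ℕ → ℕ
  | _, [], x => x
  | k, a :: l, x => ackBound (k + 1) l ((ack (2 * k))^[a] x)

theorem ackBound_mono : ∀ (k : ℕ) (l : List ℕ), Monotone (ackBound k l)
  | _, [] => monotone_id
  | k, _ :: l => (ackBound_mono (k + 1) l).comp ((ack_mono_right _).iterate _)

theorem le_ackBound : ∀ (k : ℕ) (l : List ℕ) (x : ℕ), x ≤ ackBound k l x
  | _, [], _ => le_rfl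
  | k, a :: l, x =>
    (Function.id_le_iterate_of_id_le (fun y => (lt_ack_right (2 * k) y).le) a x).trans
      (le_ackBound (k + 1) l _)

theorem ackBound_replicate_zero_append (k n : ℕ) (l : List ℕ) :
    ackBound k (List.replicate n 0 ++ l) = ackBound (k + n) l := by
  induction n generalizing k with
  | zero => rfl
  | succ n ih =>
    funext x
    rw [List.replicate_succ, List.cons_append, ackBound, ih, Function.iterate_zero_apply]
    ring_nf

theorem ackBound_fs_succ_le (x : ℕ) (l : List ℕ) (hl : ¬ isZero l) (k : ℕ) :
    ackBound k (fs x l) (x + 1) ≤ ackBound k l x := by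
  induction l using fs.induct generalizing k with
  | case1 | case3 => exact absurd (by simp [isZero]) hl
  | case2 a l =>
    simp only [fs, ackBound, Function.iterate_succ_apply]
    exact ackBound_mono _ _ ((ack_mono_right _).iterate _ (lt_ack_right _ _))
  | case4 b l =>
    simp only [fs, ackBound, Function.iterate_zero_apply, Function.iterate_succ_apply]
    refine ackBound_mono _ _ ((ack_mono_right _).iterate _ ?_)
    rw [show 2 * (k + 1) = 2 * k + 2 by ring]
    exact ack_iterate_succ_le (2 * k) x
  | case5 l ih =>
    have hl' : ¬ isZero (0 :: l) := fun h => hl (by simpa [isZero] using h)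
    simpa only [fs, ackBound, Function.iterate_zero_apply] using ih hl' (k + 1)

theorem hardy_of_isZero {l : List ℕ} (h : isZero l) (x : ℕ) : hardy l x = x := by
  rw [hardy, dif_pos h]

theorem hardy_of_not_isZero {l : List ℕ} (h : ¬ isZero l) (x : ℕ) :
    hardy l x = hardy (fs x l) (x + 1) := by
  rw [hardy, dif_neg h]

theorem hardy_le_ackBound (l : List ℕ) (x : ℕ) : hardy l x ≤ ackBound 0 l x := by
  by_cases h : isZero l
  · rw [hardy_of_isZero h]
    exact le_ackBound 0 l x
  · calc hardy l x = hardy (fs x l) (x + 1) := hardy_of_not_isZero h x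
      _ ≤ ackBound 0 (fs x l) (x + 1) := hardy_le_ackBound (fs x l) (x + 1)
      _ ≤ ackBound 0 l x := ackBound_fs_succ_le x l h 0
termination_by toOrd l
decreasing_by exact toOrd_fs_lt x l h

theorem hardy_omega_pow_le_ack_general (n m : ℕ) :
    hardy (List.replicate n 0 ++ [1]) m ≤ ack (2 * n) m :=
  calc hardy (List.replicate n 0 ++ [1]) m ≤ ackBound 0 (List.replicate n 0 ++ [1]) m :=
        hardy_le_ackBound _ m
    _ = ack (2 * n) m := by rw [ackBound_replicate_zero_append]; simp [ackBound]

/-- For all `n ≥ 1` and all `m`, `H_{ω^n}(m) ≤ Ack(2n, m)`, where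
`ω^n` is represented by the coefficient list with a single `1` at position `n`. -/
theorem hardy_omega_pow_le_ack (n m : ℕ) (hn : 1 ≤ n) :
    hardy (List.replicate n 0 ++ [1]) m ≤ ack (2 * n) m :=
  hardy_omega_pow_le_ack_general n m
end

section
/- Let F be a signature with arities bounded by A and containing at least one constant, ≻ a precedence on F whose rank function is everywhere finite, and (w, w₀) an admissible weight function for ≻; let ≻kbo be the induced Knuth–Bendix order and tw the associated sequence encoding with b := max(A,3)+1. Then tw is well defined (the unpadded length of the encoding of any term t is at most b^{weight(t)+1}) and tw embeds ≻kbo into >lex: for all terms s, t ∈ T(F,V), s ≻kbo t implies tw(s) >lex tw(t). -/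
/-- First-order terms over a signature `F` (with arity function `ar`) and variables `V`. -/
inductive Tm (F : Type) (ar : F → ℕ) (V : Type) : Type where
  | var : V → Tm F ar V
  | fn : (f : F) → (Fin (ar f) → Tm F ar V) → Tm F ar V

namespace Tm

variable {F : Type} {ar : F → ℕ} {V : Type}

/-- The size of a term: the number of occurrences of variables and function symbols. -/
def size : Tm F ar V → ℕ
  | var _ => 1
  | fn _ ts => 1 + ∑ i, (ts i).size

/-- Number of occurrences of the variable `x` in a term. -/
def count [DecidableEq V] (x : V) : Tm F ar V → ℕ
  | var y => if y = x then 1 else 0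
  | fn _ ts => ∑ i, (ts i).count x

/-- The weight of a term with respect to a weight function `(w, w₀)`. -/
def weight (w : F → ℕ) (w0 : ℕ) : Tm F ar V → ℕ
  | var _ => w0
  | fn f ts => w f + ∑ i, weight w w0 (ts i)

/-- `f` is the special symbol: a unary symbol of weight `0`. -/
def IsSpec (ar : F → ℕ) (w : F → ℕ) (f : F) : Prop := ar f = 1 ∧ w f = 0

/-- Stripping all leading occurrences of the special symbol: if `t = ∘^a t'` where the
root of `t'` is not special, then `core t = t'`. -/
def core (w : F → ℕ) : Tm F ar V → Tm F ar V
  | var x => var x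
  | fn f ts =>
      if h : ar f = 1 ∧ w f = 0 then core w (ts ⟨0, by omega⟩) else fn f ts

/-- The number of leading occurrences of the special symbol: if `t = ∘^a t'` where the
root of `t'` is not special, then `specCount t = a`. -/
def specCount (w : F → ℕ) : Tm F ar V → ℕ
  | var _ => 0
  | fn f ts =>
      if h : ar f = 1 ∧ w f = 0 then specCount w (ts ⟨0, by omega⟩) + 1 else 0

end Tm

/-- The Knuth–Bendix order induced by a precedence `prec` and a weight function
`(w, w0)`:  `s ≻kbo t` iff every variable occurs at least as often in `s` as in `t`
and either the weight of `s` is larger, or the weights are equal, `s = ∘^a g(s₁,…,sₙ)`,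
`t = ∘^b h(t₁,…,tₘ)` and either `a > b`, or `a = b` and `g ≻ h`, or `a = b`, `g = h`
and `(s₁,…,sₙ)` is lexicographically larger than `(t₁,…,tₙ)`. -/
inductive Kbo {F : Type} {ar : F → ℕ} {V : Type} [DecidableEq V]
    (prec : F → F → Prop) (w : F → ℕ) (w0 : ℕ) : Tm F ar V → Tm F ar V → Prop
  | wt {s t} : (∀ x, Tm.count x t ≤ Tm.count x s) →
      Tm.weight w w0 t < Tm.weight w w0 s → Kbo prec w w0 s t
  | spec {s t g ss h ts} : (∀ x, Tm.count x t ≤ Tm.count x s) →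
      Tm.weight w w0 s = Tm.weight w w0 t →
      Tm.core w s = Tm.fn g ss → Tm.core w t = Tm.fn h ts →
      Tm.specCount w t < Tm.specCount w s → Kbo prec w w0 s t
  | prec {s t g ss h ts} : (∀ x, Tm.count x t ≤ Tm.count x s) →
      Tm.weight w w0 s = Tm.weight w w0 t →
      Tm.core w s = Tm.fn g ss → Tm.core w t = Tm.fn h ts →
      Tm.specCount w s = Tm.specCount w t → prec g h → Kbo prec w w0 s t
  | lex {s t g ss ts} : (∀ x, Tm.count x t ≤ Tm.count x s) →
      Tm.weight w w0 s = Tm.weight w w0 t →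
      Tm.core w s = Tm.fn g ss → Tm.core w t = Tm.fn g ts →
      Tm.specCount w s = Tm.specCount w t →
      ∀ i : Fin (ar g), (∀ j, j < i → ss j = ts j) → Kbo prec w w0 (ss i) (ts i) →
      Kbo prec w w0 s t

/-- Pad a sequence with zeros up to length `n`. -/
def pad (l : List ℕ) (n : ℕ) : List ℕ := l ++ List.replicate (n - l.length) 0

/-- Increment the second entry of a sequence (used to record one more leading special
symbol in the encoding `tw`). -/
def bump : List ℕ → List ℕ
  | wv :: a :: rest => wv :: (a + 1) :: rest
  | l => l

namespace Tm

variable {F : Type} {ar : F → ℕ} {V : Type}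

/-- The sequence encoding `tw`:  `tw (∘^a x) = (w₀, a, 0)·0^m` for a variable `x` and
`tw (∘^a g(t₁,…,tₙ)) = (weight t, a, rk g)·tw t₁·⋯·tw tₙ·0^m`, padded with zeros so
that the result has length exactly `b^{weight t + 1}`. -/
def tw (w : F → ℕ) (w0 b : ℕ) (rk : F → ℕ) : Tm F ar V → List ℕ
  | var _ => pad [w0, 0, 0] (b ^ (w0 + 1))
  | fn f ts =>
      if h : ar f = 1 ∧ w f = 0 then
        bump (tw w w0 b rk (ts ⟨0, by omega⟩))
      else
        pad (Tm.weight w w0 (fn f ts) :: 0 :: rk f ::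
              (List.ofFn fun i => tw w w0 b rk (ts i)).flatten)
          (b ^ (Tm.weight w w0 (fn f ts) + 1))

end Tm

/-! The encoding of `t` begins with `weight t`, so terms of different weight are separated
by the first entry (and by the length), while for terms of equal weight the three header
entries `(weight, a, rk g)` mirror the three comparisons of `≻kbo` and the recursive
encodings of the arguments are concatenated in order, which turns the lexicographic case
into a comparison inside the first differing block. For the length, every argument of a
non-special symbol is strictly lighter than the term, so the header and each of the at most
`A ≤ b - 1` argument blocks have length at most `b^{weight t}`. -/

/-- `p` is lexicographically greater than `q` at a position inside both lists; unlike
`List.Lex`, being a proper extension does not count. -/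
inductive FirstDiffGt {α : Type*} [LT α] : List α → List α → Prop
  | head {a b : α} {p q : List α} : b < a → FirstDiffGt (a :: p) (b :: q)
  | cons (a : α) {p q : List α} : FirstDiffGt p q → FirstDiffGt (a :: p) (a :: q)

namespace FirstDiffGt

variable {α : Type*} [LT α] {p q : List α}

theorem append (x y : List α) (h : FirstDiffGt p q) : FirstDiffGt (p ++ x) (q ++ y) := by
  induction h with
  | head hab => exact head hab
  | cons a _ ih => exact cons a ih

theorem append_left (c : List α) (h : FirstDiffGt p q) : FirstDiffGt (c ++ p) (c ++ q) := by
  induction c with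
  | nil => exact h
  | cons a c ih => exact cons a ih

theorem pad {p q : List ℕ} (m n : ℕ) (h : FirstDiffGt p q) :
    FirstDiffGt (_root_.pad p m) (_root_.pad q n) :=
  h.append _ _

theorem flatten_ofFn {n : ℕ} {f g : Fin n → List α} (i : Fin n) (hlt : ∀ j < i, f j = g j)
    (hi : FirstDiffGt (f i) (g i)) :
    FirstDiffGt (List.ofFn f).flatten (List.ofFn g).flatten := by
  induction n with
  | zero => exact i.elim0
  | succ n ih =>
    simp only [List.ofFn_succ, List.flatten_cons]
    cases i using Fin.cases with
    | zero => exact hi.append _ _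
    | succ i =>
      rw [hlt 0 (Fin.succ_pos i)]
      exact (ih i (fun j hj => hlt j.succ (Fin.succ_lt_succ_iff.mpr hj)) hi).append_left _

theorem lexGt {p q : List ℕ} (h : FirstDiffGt p q) (hlen : p.length = q.length) :
    _root_.lexGt p q := by
  refine Or.inr ⟨hlen, ?_⟩
  induction h with
  | head hab => exact ⟨0, by simp, by simp, by simpa⟩
  | cons a _ ih =>
    obtain ⟨i, hi, hpre, hgt⟩ := ih (by simpa using hlen)
    refine ⟨i + 1, by simpa, fun j hj => ?_, by simpa⟩
    cases j with
    | zero => rfl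
    | succ j => simpa using hpre j (by omega)

end FirstDiffGt

theorem length_pad {l : List ℕ} {n : ℕ} (h : l.length ≤ n) : (pad l n).length = n := by
  simp only [pad, List.length_append, List.length_replicate]
  omega

theorem length_bump (l : List ℕ) : (bump l).length = l.length := by
  unfold bump
  split <;> simp

theorem bump_pad (x y : ℕ) (l : List ℕ) (n : ℕ) :
    bump (pad (x :: y :: l) n) = pad (x :: (y + 1) :: l) n := by
  simp [pad, bump]

theorem three_add_sum_pow_le {n b W : ℕ} (e : Fin n → ℕ) (hb : 3 ≤ b) (hn : n < b)
    (hW : 1 ≤ W) (he : ∀ i, e i ≤ W) : 3 + ∑ i, b ^ e i ≤ b ^ (W + 1) := by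
  have hsum : ∑ i, b ^ e i ≤ n * b ^ W := by
    simpa using Finset.sum_le_card_nsmul Finset.univ _ _
      fun i _ => Nat.pow_le_pow_right (by omega) (he i)
  have hbW : b ≤ b ^ W := Nat.le_self_pow (by omega) b
  calc 3 + ∑ i, b ^ e i ≤ (n + 1) * b ^ W := by rw [add_one_mul]; omega
    _ ≤ b * b ^ W := Nat.mul_le_mul_right _ hn
    _ = b ^ (W + 1) := (pow_succ' b W).symm

namespace Tm

variable {F : Type} {ar : F → ℕ} {V : Type}

section Weight

variable {w : F → ℕ} {w0 : ℕ}

theorem weight_fn_of_spec {f : F} (hf : ar f = 1 ∧ w f = 0) (ts : Fin (ar f) → Tm F ar V) :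
    weight w w0 (fn f ts) = weight w w0 (ts ⟨0, by omega⟩) := by
  obtain ⟨h1, h2⟩ := hf
  simp only [weight, h2, zero_add]
  exact Fintype.sum_eq_single _ fun j hj => absurd (Fin.ext (by omega)) hj

theorem le_weight (hwc : ∀ c, ar c = 0 → w0 ≤ w c) (t : Tm F ar V) : w0 ≤ weight w w0 t := by
  induction t with
  | var x => exact le_rfl
  | fn f ts ih =>
    rw [weight]
    rcases Nat.eq_zero_or_pos (ar f) with h | h
    · exact (hwc f h).trans (Nat.le_add_right _ _)
    · calc w0 ≤ weight w w0 (ts ⟨0, h⟩) := ih _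
        _ ≤ ∑ i, weight w w0 (ts i) := Finset.single_le_sum (f := fun i => weight w w0 (ts i))
            (fun _ _ => Nat.zero_le _) (Finset.mem_univ _)
        _ ≤ _ := Nat.le_add_left _ _

/-- Below a non-special symbol every argument is strictly lighter: either the symbol has
positive weight, or it has a second argument, of weight at least `w0 > 0`. -/
theorem weight_lt_weight_fn (hw0 : 0 < w0) (hwc : ∀ c, ar c = 0 → w0 ≤ w c) {f : F}
    (hf : ¬(ar f = 1 ∧ w f = 0)) (ts : Fin (ar f) → Tm F ar V) (i : Fin (ar f)) :
    weight w w0 (ts i) < weight w w0 (fn f ts) := by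
  classical
  rw [weight, ← Finset.add_sum_erase _ _ (Finset.mem_univ i)]
  suffices 0 < w f + ∑ j ∈ Finset.univ.erase i, weight w w0 (ts j) by omega
  by_cases hwf : w f = 0
  · have hrest : (Finset.univ.erase i).Nonempty := by
      rw [← Finset.card_pos, Finset.card_erase_of_mem (Finset.mem_univ i), Finset.card_univ,
        Fintype.card_fin]
      have := i.2
      omega
    exact Nat.add_pos_right _
      (Finset.sum_pos (fun j _ => hw0.trans_le (le_weight hwc _)) hrest)
  · omega

end Weight

section Encoding

variable (w : F → ℕ) (w0 b : ℕ) (rk : F → ℕ)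

theorem exists_tw_eq_cons (t : Tm F ar V) : ∃ l, tw w w0 b rk t = weight w w0 t :: l := by
  induction t with
  | var x => exact ⟨_, rfl⟩
  | fn f ts ih =>
    by_cases hf : ar f = 1 ∧ w f = 0
    · obtain ⟨l, hl⟩ := ih ⟨0, by omega⟩
      rw [tw, dif_pos hf, hl, weight_fn_of_spec hf]
      cases l with
      | nil => exact ⟨[], rfl⟩
      | cons a l => exact ⟨_, rfl⟩
    · rw [tw, dif_neg hf]
      exact ⟨_, rfl⟩

theorem tw_eq_of_core_eq_fn {t : Tm F ar V} {g : F} {ss : Fin (ar g) → Tm F ar V}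
    (h : core w t = fn g ss) :
    tw w w0 b rk t = pad (weight w w0 t :: specCount w t :: rk g ::
        (List.ofFn fun i => tw w w0 b rk (ss i)).flatten) (b ^ (weight w w0 t + 1)) := by
  induction t with
  | var y => simp [core] at h
  | fn f ts ih =>
    rw [core] at h
    by_cases hf : ar f = 1 ∧ w f = 0
    · rw [dif_pos hf] at h
      rw [tw, specCount, dif_pos hf, dif_pos hf, ih _ h, weight_fn_of_spec hf]
      exact bump_pad _ _ _ _
    · rw [dif_neg hf] at h
      obtain ⟨rfl, h⟩ := Tm.fn.inj h
      obtain rfl := eq_of_heq h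
      rw [tw, specCount, dif_neg hf, dif_neg hf]

variable {w w0 b}

theorem length_tw (hw0 : 0 < w0) (hwc : ∀ c, ar c = 0 → w0 ≤ w c) (hb : 3 ≤ b)
    (har : ∀ f, ar f < b) (t : Tm F ar V) :
    (tw w w0 b rk t).length = b ^ (weight w w0 t + 1) := by
  induction t with
  | var x =>
    exact length_pad (hb.trans (Nat.le_self_pow (by omega) b))
  | fn f ts ih =>
    by_cases hf : ar f = 1 ∧ w f = 0
    · rw [tw, dif_pos hf, length_bump, ih, weight_fn_of_spec hf]
    · rw [tw, dif_neg hf]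
      apply length_pad
      simp only [List.length_cons, List.length_flatten, List.map_ofFn, List.sum_ofFn,
        Function.comp_def, ih]
      have := three_add_sum_pow_le (fun i => weight w w0 (ts i) + 1) hb (har f)
        (hw0.trans_le (le_weight hwc _)) fun i => weight_lt_weight_fn hw0 hwc hf ts i
      omega

end Encoding

end Tm

theorem Kbo.weight_le {F : Type} {ar : F → ℕ} {V : Type} [DecidableEq V]
    {prec : F → F → Prop} {w : F → ℕ} {w0 : ℕ} {s t : Tm F ar V} (h : Kbo prec w w0 s t) :
    Tm.weight w w0 t ≤ Tm.weight w w0 s := by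
  cases h <;> omega

theorem Kbo.firstDiffGt_tw {F : Type} {ar : F → ℕ} {V : Type} [DecidableEq V]
    {prec : F → F → Prop} {rk : F → ℕ} (hrk : ∀ f g, prec f g → rk g < rk f)
    {w : F → ℕ} {w0 : ℕ} (b : ℕ) {s t : Tm F ar V} (h : Kbo prec w w0 s t) :
    FirstDiffGt (Tm.tw w w0 b rk s) (Tm.tw w w0 b rk t) := by
  induction h with
  | @wt s t _ hwt =>
    obtain ⟨ls, hs⟩ := Tm.exists_tw_eq_cons w w0 b rk s
    obtain ⟨lt, ht⟩ := Tm.exists_tw_eq_cons w w0 b rk t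
    rw [hs, ht]
    exact .head hwt
  | spec _ hweq hs ht hsc =>
    rw [Tm.tw_eq_of_core_eq_fn _ _ _ _ hs, Tm.tw_eq_of_core_eq_fn _ _ _ _ ht, hweq]
    exact ((FirstDiffGt.head hsc).cons _).pad _ _
  | prec _ hweq hs ht hsc hgh =>
    rw [Tm.tw_eq_of_core_eq_fn _ _ _ _ hs, Tm.tw_eq_of_core_eq_fn _ _ _ _ ht, hweq, hsc]
    exact (((FirstDiffGt.head (hrk _ _ hgh)).cons _).cons _).pad _ _
  | lex _ hweq hs ht hsc i hlt _ ih =>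
    rw [Tm.tw_eq_of_core_eq_fn _ _ _ _ hs, Tm.tw_eq_of_core_eq_fn _ _ _ _ ht, hweq, hsc]
    have hargs := FirstDiffGt.flatten_ofFn i (fun j hj => congrArg _ (hlt j hj)) ih
    exact (((hargs.cons _).cons _).cons _).pad _ _

theorem kbo_embeds_into_lex_general {F : Type} {ar : F → ℕ} {V : Type} [DecidableEq V]
    (A : ℕ) (hA : ∀ f, ar f ≤ A)
    (prec : F → F → Prop)
    (rk : F → ℕ)
    (hrk₁ : ∀ f g, prec f g → rk g < rk f)
    (w : F → ℕ) (w0 : ℕ) (hw0 : 0 < w0)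
    (hwc : ∀ c, ar c = 0 → w0 ≤ w c)
    (b : ℕ) (hb : b = max A 3 + 1) :
    (∀ t : Tm F ar V, (Tm.tw w w0 b rk t).length = b ^ (Tm.weight w w0 t + 1)) ∧
    (∀ s t : Tm F ar V, Kbo prec w w0 s t →
      lexGt (Tm.tw w w0 b rk s) (Tm.tw w w0 b rk t)) := by
  have hlen := Tm.length_tw (V := V) rk hw0 hwc (by omega : 3 ≤ b) fun f => by have := hA f; omega
  refine ⟨hlen, fun s t h => ?_⟩
  rcases h.weight_le.lt_or_eq with hlt | heq
  · left
    rw [hlen, hlen]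
    exact Nat.pow_lt_pow_right (by omega) (by omega)
  · exact (h.firstDiffGt_tw hrk₁ b).lexGt (by rw [hlen, hlen, heq])

/-- Let `F` be a signature with arities bounded by `A` containing a
constant, `prec` a precedence whose rank function `rk` is everywhere finite, `(w, w0)`
an admissible weight function, and `b = max(A,3)+1`.  Then the encoding `tw` is well
defined (every encoding has the prescribed length `b^{weight(t)+1}`), and `tw` embeds
`≻kbo` into `>lex`. -/
theorem kbo_embeds_into_lex {F : Type} {ar : F → ℕ} {V : Type} [DecidableEq V]
    (A : ℕ) (hA : ∀ f, ar f ≤ A) (hconst : ∃ c, ar c = 0)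
    (prec : F → F → Prop)
    (hirr : ∀ f, ¬ prec f f)
    (htrans : ∀ f g h, prec f g → prec g h → prec f h)
    (rk : F → ℕ)
    (hrk₁ : ∀ f g, prec f g → rk g < rk f)
    (hrk₂ : ∀ f, rk f = 0 ∨ ∃ g, prec f g ∧ rk f = rk g + 1)
    (w : F → ℕ) (w0 : ℕ) (hw0 : 0 < w0)
    (hwc : ∀ c, ar c = 0 → w0 ≤ w c)
    (hadm : ∀ f, ar f = 1 → w f = 0 → ∀ g, g ≠ f → prec f g)
    (b : ℕ) (hb : b = max A 3 + 1) :
    (∀ t : Tm F ar V, (Tm.tw w w0 b rk t).length = b ^ (Tm.weight w w0 t + 1)) ∧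
    (∀ s t : Tm F ar V, Kbo prec w w0 s t →
      lexGt (Tm.tw w w0 b rk s) (Tm.tw w w0 b rk t)) :=
  kbo_embeds_into_lex_general A hA prec rk hrk₁ w w0 hw0 hwc b hb
end

section
/- Let C be a Δ-restricted interpretation for a finite signature F, and set M := max({c_f : f ∈ F} ∪ {d_f : f ∈ F} ∪ {1}) and N := max({b_{f,i} : f ∈ F, 1 ≤ i ≤ arity(f)} ∪ {1}). Then for every ground term t over F and every real Δ > 0, [t]_Δ ≤ M·(|t| + N·|t|²·Δ). -/
/-- A Δ-linear interpretation for a signature `F` with arity function `ar`. -/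
structure DeltaLin (F : Type) (ar : F → ℕ) where
  a : (f : F) → Fin (ar f) → ℕ
  b : (f : F) → Fin (ar f) → ℕ
  c : F → ℕ
  d : F → ℕ
  pos : ∀ f i, 1 ≤ a f i + b f i

namespace DeltaLin

variable {F : Type} {ar : F → ℕ}

/-- The interpretation function
`f[Δ](z₁,…,zₙ) = Σᵢ a_{f,i}·zᵢ + Σᵢ b_{f,i}·zᵢ·Δ + c_f·Δ + d_f`. -/
noncomputable def fA (C : DeltaLin F ar) (f : F) (Δ : ℝ) (z : Fin (ar f) → ℝ) : ℝ :=
  (∑ i, (C.a f i : ℝ) * z i) + (∑ i, (C.b f i : ℝ) * z i * Δ) +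
    (C.c f : ℝ) * Δ + (C.d f : ℝ)

/-- The parameter function `f^i(Δ) = Δ/(a_{f,i} + b_{f,i}·Δ)`. -/
noncomputable def par (C : DeltaLin F ar) (f : F) (i : Fin (ar f)) (Δ : ℝ) : ℝ :=
  Δ / ((C.a f i : ℝ) + (C.b f i : ℝ) * Δ)

/-- The interpretation is Δ-restricted if `a_{f,i} ∈ {0,1}` for all `f` and `i`. -/
def Restricted (C : DeltaLin F ar) : Prop := ∀ f i, C.a f i ≤ 1

/-- Context-dependent evaluation of ground terms:
`[f(t₁,…,tₙ)]_Δ = f[Δ]([t₁]_{f¹(Δ)},…,[tₙ]_{fⁿ(Δ)})`. -/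
noncomputable def evalG (C : DeltaLin F ar) : Tm F ar Empty → ℝ → ℝ
  | .var x, _ => x.elim
  | .fn f ts, Δ => C.fA f Δ fun i => evalG C (ts i) (C.par f i Δ)

end DeltaLin

namespace DeltaLin

variable {F : Type} {ar : F → ℕ} (C : DeltaLin F ar) {f : F} {i : Fin (ar f)} {Δ : ℝ}

theorem evalG_fn (ts : Fin (ar f) → Tm F ar Empty) (Δ : ℝ) :
    C.evalG (.fn f ts) Δ = C.fA f Δ fun i => C.evalG (ts i) (C.par f i Δ) :=
  rfl

theorem fA_eq_sum_weight_mul (f : F) (Δ : ℝ) (z : Fin (ar f) → ℝ) :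
    C.fA f Δ z = ∑ i, ((C.a f i : ℝ) + C.b f i * Δ) * z i + C.c f * Δ + C.d f := by
  simp only [fA, add_mul, Finset.sum_add_distrib]
  congr 3
  exact Finset.sum_congr rfl fun i _ => by ring

theorem weight_pos (hΔ : 0 < Δ) : 0 < (C.a f i : ℝ) + C.b f i * Δ := by
  have hab := C.pos f i
  rcases (C.a f i).eq_zero_or_pos with ha | ha
  · have hb : (0 : ℝ) < C.b f i := by exact_mod_cast (show 0 < C.b f i by omega)
    rw [ha, Nat.cast_zero, zero_add]
    positivity
  · have ha' : (0 : ℝ) < C.a f i := by exact_mod_cast ha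
    positivity

theorem par_pos (hΔ : 0 < Δ) : 0 < C.par f i Δ :=
  div_pos hΔ (C.weight_pos hΔ)

theorem weight_mul_par (hΔ : 0 < Δ) : ((C.a f i : ℝ) + C.b f i * Δ) * C.par f i Δ = Δ :=
  mul_div_cancel₀ Δ (C.weight_pos hΔ).ne'

variable {C} in
theorem Restricted.weight_le (hres : C.Restricted) {N : ℝ} (hb : (C.b f i : ℝ) ≤ N)
    (hΔ : 0 ≤ Δ) : (C.a f i : ℝ) + C.b f i * Δ ≤ 1 + N * Δ := by
  have ha : (C.a f i : ℝ) ≤ 1 := by exact_mod_cast hres f i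
  gcongr

variable {C} in
theorem Restricted.weight_mul_le (hres : C.Restricted) {M N s z : ℝ} (hM : 0 ≤ M)
    (hb : (C.b f i : ℝ) ≤ N) (hs : 0 ≤ s) (hΔ : 0 < Δ)
    (hz : z ≤ M * (s + N * s ^ 2 * C.par f i Δ)) :
    ((C.a f i : ℝ) + C.b f i * Δ) * z ≤ M * (s + N * (s + s ^ 2) * Δ) := by
  set w : ℝ := (C.a f i : ℝ) + C.b f i * Δ
  have hw : w ≤ 1 + N * Δ := hres.weight_le hb hΔ.le
  calc w * z ≤ w * (M * (s + N * s ^ 2 * C.par f i Δ)) :=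
        mul_le_mul_of_nonneg_left hz (C.weight_pos hΔ).le
    _ = M * (w * s + N * s ^ 2 * (w * C.par f i Δ)) := by ring
    _ = M * (w * s + N * s ^ 2 * Δ) := by rw [C.weight_mul_par hΔ]
    _ ≤ M * ((1 + N * Δ) * s + N * s ^ 2 * Δ) := by gcongr
    _ = M * (s + N * (s + s ^ 2) * Δ) := by ring

variable {C} in
theorem Restricted.evalG_le (hres : C.Restricted) {M N : ℝ} (hc : ∀ f, (C.c f : ℝ) ≤ M)
    (hd : ∀ f, (C.d f : ℝ) ≤ M) (hb : ∀ f i, (C.b f i : ℝ) ≤ N) (hN : 1 ≤ N)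
    (t : Tm F ar Empty) {Δ : ℝ} (hΔ : 0 < Δ) :
    C.evalG t Δ ≤ M * (t.size + N * (t.size : ℝ) ^ 2 * Δ) := by
  induction t generalizing Δ with
  | var x => exact x.elim
  | fn f ts ih =>
    have hM : 0 ≤ M := (Nat.cast_nonneg _).trans (hc f)
    set s : Fin (ar f) → ℝ := fun i => ((ts i).size : ℝ)
    set S : ℝ := ∑ i, s i
    have hs : ∀ i, 0 ≤ s i := fun i => Nat.cast_nonneg _
    have hS : 0 ≤ S := Finset.sum_nonneg fun i _ => hs i
    have hsq : ∑ i, s i ^ 2 ≤ S ^ 2 := Finset.sum_sq_le_sq_sum_of_nonneg fun i _ => hs i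
    have hsize : ((Tm.fn f ts).size : ℝ) = 1 + S := by simp [Tm.size, S, s]
    have hargs : ∀ i, ((C.a f i : ℝ) + C.b f i * Δ) * C.evalG (ts i) (C.par f i Δ) ≤
        M * (s i + N * (s i + s i ^ 2) * Δ) := fun i =>
      hres.weight_mul_le hM (hb f i) (hs i) hΔ (ih i (C.par_pos hΔ))
    rw [evalG_fn, fA_eq_sum_weight_mul, hsize]
    calc _ ≤ ∑ i, M * (s i + N * (s i + s i ^ 2) * Δ) + M * Δ + M := by
          gcongr ?_ + ?_ * Δ + ?_
          exacts [Finset.sum_le_sum fun i _ => hargs i, hc f, hd f]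
      _ = M * (S + N * (S + ∑ i, s i ^ 2) * Δ + Δ + 1) := by
          simp only [S, mul_add, add_mul, Finset.sum_add_distrib, ← Finset.mul_sum,
            ← Finset.sum_mul]
          ring
      _ ≤ M * ((1 + S) + N * (1 + S) ^ 2 * Δ) := by
          have hsq' : N * (S + ∑ i, s i ^ 2) * Δ ≤ N * (S + S ^ 2) * Δ := by gcongr
          have hΔN : Δ ≤ N * (1 + S) * Δ :=
            le_mul_of_one_le_left hΔ.le (one_le_mul_of_one_le_of_one_le hN (by linarith))
          exact mul_le_mul_of_nonneg_left (by nlinarith) hM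

end DeltaLin

/-- For a Δ-restricted interpretation `C` over a finite signature,
with `M = max({c_f} ∪ {d_f} ∪ {1})` and `N = max({b_{f,i}} ∪ {1})`, every ground term
`t` and every `Δ > 0` satisfy `[t]_Δ ≤ M·(|t| + N·|t|²·Δ)`. -/
theorem deltaRestricted_eval_bound {F : Type} [Fintype F] {ar : F → ℕ}
    (C : DeltaLin F ar) (hres : C.Restricted) (M N : ℕ)
    (hM : M = (Finset.univ.sup C.c) ⊔ (Finset.univ.sup C.d) ⊔ 1)
    (hN : N = (Finset.univ.sup fun f => Finset.univ.sup fun i => C.b f i) ⊔ 1) :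
    ∀ (t : Tm F ar Empty) (Δ : ℝ), 0 < Δ →
      C.evalG t Δ ≤ (M : ℝ) * ((Tm.size t : ℝ) + (N : ℝ) * (Tm.size t : ℝ) ^ 2 * Δ) := by
  have hc : ∀ f, (C.c f : ℝ) ≤ M := fun f => by
    exact_mod_cast hM ▸ (Finset.le_sup (Finset.mem_univ f)).trans (le_sup_left.trans le_sup_left)
  have hd : ∀ f, (C.d f : ℝ) ≤ M := fun f => by
    exact_mod_cast hM ▸ (Finset.le_sup (Finset.mem_univ f)).trans (le_sup_right.trans le_sup_left)
  have hb : ∀ f i, (C.b f i : ℝ) ≤ N := fun f i => by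
    exact_mod_cast hN ▸ ((Finset.le_sup (Finset.mem_univ i)).trans
      (Finset.le_sup (f := fun f => Finset.univ.sup (C.b f)) (Finset.mem_univ f))).trans le_sup_left
  have hN1 : (1 : ℝ) ≤ N := by exact_mod_cast hN ▸ le_sup_right
  exact fun t Δ hΔ => hres.evalG_le hc hd hb hN1 t hΔ
end

section
/- Let R be a finite TRS with defined symbols D (the root symbols of the left-hand sides of R). Let t = C[t₁,…,tₙ] where the n-hole context C contains no defined symbols and no variables, and each tᵢ has its root symbol in D ∪ V. Let σ be a substitution such that tσ is terminating with respect to →_R. Then dh(tσ, →_R) = dh(t₁σ, →_R) + ⋯ + dh(tₙσ, →_R). -/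
namespace Tm

variable {F : Type} {ar : F → ℕ} {V : Type}

/-- Application of a substitution to a term. -/
def subst (σ : V → Tm F ar V) : Tm F ar V → Tm F ar V
  | var x => σ x
  | fn f ts => fn f fun i => (ts i).subst σ

/-- The set of function symbols occurring in a term. -/
def funcs : Tm F ar V → Set F
  | var _ => ∅
  | fn f ts => insert f (⋃ i, (ts i).funcs)

end Tm

/-- `R` is a term rewrite system: left-hand sides are not variables and every variable
of a right-hand side occurs in the corresponding left-hand side. -/
def IsTRS {F : Type} {ar : F → ℕ} (R : Set (Tm F ar ℕ × Tm F ar ℕ)) : Prop :=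
  ∀ p ∈ R, (∀ x : ℕ, p.1 ≠ Tm.var x) ∧
    ∀ x : ℕ, 0 < Tm.count x p.2 → 0 < Tm.count x p.1

/-- The rewrite relation of `R`: the closure of the rules under contexts and
substitutions. -/
inductive Rew {F : Type} {ar : F → ℕ} (R : Set (Tm F ar ℕ × Tm F ar ℕ)) :
    Tm F ar ℕ → Tm F ar ℕ → Prop
  | rule {l r} (σ : ℕ → Tm F ar ℕ) : (l, r) ∈ R → Rew R (l.subst σ) (r.subst σ)
  | congr {f} {ts : Fin (ar f) → Tm F ar ℕ} (i) {t'} :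
      Rew R (ts i) t' → Rew R (.fn f ts) (.fn f (Function.update ts i t'))

/-- A `ρ`-derivation of length `n`: `d 0 → d 1 → ⋯ → d n`. -/
def ChainOf {A : Type} (ρ : A → A → Prop) (n : ℕ) (d : ℕ → A) : Prop :=
  ∀ i < n, ρ (d i) (d (i + 1))

/-- The defined symbols of `R`: the root symbols of left-hand sides of rules of `R`. -/
def DefinedSym {F : Type} {ar : F → ℕ} (R : Set (Tm F ar ℕ × Tm F ar ℕ)) : Set F :=
  {f | ∃ p ∈ R, ∃ ts, p.1 = Tm.fn f ts}

/-- `Decomp X t L` expresses that `t = C[t₁,…,tₙ]` where the context `C` contains no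
`X`-rooted subterms (in particular, for `X` = "root in `D ∪ V`", no defined symbols and
no variables), each `tᵢ` is `X`-rooted, and `L = [t₁,…,tₙ]` lists these maximal
`X`-rooted subterms in order. -/
inductive Decomp {F : Type} {ar : F → ℕ} (X : Tm F ar ℕ → Prop) :
    Tm F ar ℕ → List (Tm F ar ℕ) → Prop
  | leaf {t} : X t → Decomp X t [t]
  | node {f} {ts : Fin (ar f) → Tm F ar ℕ} (L : Fin (ar f) → List (Tm F ar ℕ)) :
      ¬ X (.fn f ts) → (∀ i, Decomp X (ts i) (L i)) →
      Decomp X (.fn f ts) (List.ofFn L).flatten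

/-- `IsDH ρ s h` expresses that the derivation height of `s` with respect to the
relation `ρ` is the (well-defined) natural number `h`: some derivation from `s` has
length `h` and every derivation from `s` has length at most `h`. -/
def IsDH {A : Type} (ρ : A → A → Prop) (s : A) (h : ℕ) : Prop :=
  (∃ d : ℕ → A, d 0 = s ∧ ChainOf ρ h d) ∧
  ∀ (m : ℕ) (d : ℕ → A), d 0 = s → ChainOf ρ m d → m ≤ h

/-! Below a context without defined symbols and variables no root step is possible, so every
rewrite step of `tσ = C[t₁σ,…,tₙσ]` rewrites inside exactly one `tᵢσ`, and the derivations of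
`tσ` are the interleavings of derivations of the `tᵢσ`.  Hence the derivation heights add up.
Their existence uses that a finite TRS is finitely branching (variable condition), so that
König's lemma bounds the derivations of a terminating term. -/

section DerivationHeight

variable {A : Type} {ρ : A → A → Prop}

lemma ChainOf.tail {n : ℕ} {d : ℕ → A} (h : ChainOf ρ (n + 1) d) :
    ChainOf ρ n (fun i => d (i + 1)) :=
  fun i hi => h (i + 1) (by omega)

lemma ChainOf.zero (d : ℕ → A) : ChainOf ρ 0 d :=
  fun _ hi => absurd hi (Nat.not_lt_zero _)

lemma ChainOf.cons {n : ℕ} {d : ℕ → A} {a : A} (ha : ρ a (d 0)) (h : ChainOf ρ n d) :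
    ChainOf ρ (n + 1) (fun i => Nat.casesOn i a d) := by
  rintro (_ | i) hi
  · exact ha
  · exact h i (by omega)

lemma acc_of_not_exists_chain {a : A}
    (ha : ¬ ∃ d : ℕ → A, d 0 = a ∧ ∀ i, ρ (d i) (d (i + 1))) : Acc (flip ρ) a :=
  not_not.mp (mt not_acc_iff_exists_descending_chain.mp ha)

lemma exists_isDH_of_chainOf_le {a : A} {n : ℕ}
    (hbound : ∀ m d, d 0 = a → ChainOf ρ m d → m ≤ n) : ∃ h ≤ n, IsDH ρ a h := by
  classical
  let P m := ∃ d : ℕ → A, d 0 = a ∧ ChainOf ρ m d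
  have hP0 : P 0 := ⟨fun _ => a, rfl, .zero _⟩
  exact ⟨Nat.findGreatest P n, Nat.findGreatest_le n, Nat.findGreatest_spec (Nat.zero_le n) hP0,
    fun m d hd0 hd => Nat.le_findGreatest (hbound m d hd0 hd) ⟨d, hd0, hd⟩⟩

lemma IsDH.exists_isDH_lt_of_rel {a b : A} {h : ℕ} (ha : IsDH ρ a h) (hab : ρ a b) :
    ∃ h' < h, IsDH ρ b h' := by
  obtain ⟨h', hle, hb⟩ := exists_isDH_of_chainOf_le (ρ := ρ) (a := b) (n := h - 1)
    fun m d hd0 hd => by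
      have := ha.2 (m + 1) _ rfl (ChainOf.cons (hd0 ▸ hab) hd)
      omega
  have hpos := ha.2 1 _ rfl (ChainOf.cons hab (.zero fun _ => b))
  exact ⟨h', by omega, hb⟩

lemma IsDH.exists_rel_isDH_pred {a : A} {h : ℕ} (ha : IsDH ρ a h) (hpos : 0 < h) :
    ∃ b, ρ a b ∧ IsDH ρ b (h - 1) := by
  obtain ⟨d, hd0, hd⟩ := ha.1
  have hstep : ρ a (d 1) := hd0 ▸ hd 0 hpos
  refine ⟨d 1, hstep, ⟨fun i => d (i + 1), rfl, ?_⟩, fun m e he0 he => ?_⟩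
  · exact (show ChainOf ρ (h - 1 + 1) d by rwa [Nat.sub_add_cancel hpos]).tail
  · have := ha.2 (m + 1) _ rfl (ChainOf.cons (he0 ▸ hstep) he)
    omega

/-- The recursive characterisation `dh a = max {dh b + 1 | a → b}` (with `max ∅ = 0`). -/
lemma isDH_of_forall_rel {a : A} {h : ℕ} (hsucc : ∀ b, ρ a b → ∃ h' < h, IsDH ρ b h')
    (hmax : 0 < h → ∃ b, ρ a b ∧ IsDH ρ b (h - 1)) : IsDH ρ a h := by
  refine ⟨?_, ?_⟩
  · rcases Nat.eq_zero_or_pos h with rfl | hpos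
    · exact ⟨fun _ => a, rfl, .zero _⟩
    · obtain ⟨b, hab, ⟨d, hd0, hd⟩, -⟩ := hmax hpos
      refine ⟨fun i => Nat.casesOn i a d, rfl, ?_⟩
      rw [← Nat.sub_add_cancel hpos]
      exact ChainOf.cons (hd0 ▸ hab) hd
  · rintro (_ | m) d hd0 hd
    · exact Nat.zero_le h
    · obtain ⟨h', hlt, hb⟩ := hsucc (d 1) (hd0 ▸ hd 0 (Nat.succ_pos m))
      have := hb.2 m _ rfl hd.tail
      omega

lemma exists_isDH_of_acc (hfin : ∀ a, {b | ρ a b}.Finite) {a : A} (ha : Acc (flip ρ) a) :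
    ∃ h, IsDH ρ a h := by
  induction ha with
  | intro a _ ih =>
    choose! H hH using ih
    obtain ⟨h, -, hdh⟩ := exists_isDH_of_chainOf_le (ρ := ρ) (a := a)
      (n := (hfin a).toFinset.sup H + 1) fun m d hd0 hd => by
        rcases m with _ | m
        · exact Nat.zero_le _
        · have hstep : ρ a (d 1) := hd0 ▸ hd 0 (Nat.succ_pos m)
          have hm := (hH (d 1) hstep).2 m _ rfl hd.tail
          have := Finset.le_sup (f := H) ((hfin a).mem_toFinset.mpr hstep)
          omega
    exact ⟨h, hdh⟩

end DerivationHeight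

lemma Finset.sum_update_add_apply {ι M : Type*} [Fintype ι] [DecidableEq ι] [AddCommMonoid M]
    (f : ι → M) (i : ι) (b : M) : ∑ j, Function.update f i b j + f i = ∑ j, f j + b := by
  rw [Finset.sum_update_of_mem (Finset.mem_univ i), Finset.sdiff_singleton_eq_erase,
    ← Finset.add_sum_erase _ f (Finset.mem_univ i)]
  abel

lemma List.forall₂_ofFn {α β : Type*} {r : α → β → Prop} {n : ℕ} {f : Fin n → α}
    {g : Fin n → β} (h : ∀ i, r (f i) (g i)) : Forall₂ r (ofFn f) (ofFn g) := by
  induction n with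
  | zero => simp
  | succ n ih =>
    rw [List.ofFn_succ, List.ofFn_succ]
    exact .cons (h 0) (ih fun i => h i.succ)

namespace Tm

variable {F : Type} {ar : F → ℕ}

lemma count_fn_pos_iff {f : F} {ts : Fin (ar f) → Tm F ar ℕ} {x : ℕ} :
    0 < (fn f ts).count x ↔ ∃ i, 0 < (ts i).count x := by
  simp [count, Finset.sum_pos_iff]

lemma subst_congr {t : Tm F ar ℕ} {σ τ : ℕ → Tm F ar ℕ}
    (h : ∀ x, 0 < t.count x → σ x = τ x) : t.subst σ = t.subst τ := by
  induction t with
  | var x => exact h x (by simp [count])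
  | fn f ts ih =>
    simp only [subst, fn.injEq, heq_eq_eq, true_and]
    exact funext fun i => ih i fun x hx => h x (count_fn_pos_iff.mpr ⟨i, hx⟩)

lemma eq_of_subst_eq {t : Tm F ar ℕ} {σ τ : ℕ → Tm F ar ℕ} (h : t.subst σ = t.subst τ)
    {x : ℕ} (hx : 0 < t.count x) : σ x = τ x := by
  induction t with
  | var y =>
    obtain rfl : y = x := by by_contra hyx; simp [count, hyx] at hx
    exact h
  | fn f ts ih =>
    obtain ⟨i, hi⟩ := count_fn_pos_iff.mp hx
    simp only [subst, fn.injEq, heq_eq_eq, true_and] at h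
    exact ih i (congrFun h i) hi

end Tm

section Rewriting

variable {F : Type} {ar : F → ℕ} {R : Set (Tm F ar ℕ × Tm F ar ℕ)}

lemma Rew.root_or_arg {s v : Tm F ar ℕ} (h : Rew R s v) :
    (∃ p ∈ R, ∃ τ, s = p.1.subst τ ∧ v = p.2.subst τ) ∨
    ∃ f, ∃ ts : Fin (ar f) → Tm F ar ℕ, ∃ i t', s = Tm.fn f ts ∧ Rew R (ts i) t' ∧
      v = Tm.fn f (Function.update ts i t') := by
  cases h with
  | rule τ hmem => exact .inl ⟨_, hmem, τ, rfl, rfl⟩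
  | congr i hst => exact .inr ⟨_, _, i, _, rfl, hst, rfl⟩

lemma IsTRS.subsingleton_root_step (hR : IsTRS R) {p : Tm F ar ℕ × Tm F ar ℕ} (hp : p ∈ R)
    (s : Tm F ar ℕ) : {v | ∃ τ, s = p.1.subst τ ∧ v = p.2.subst τ}.Subsingleton := by
  rintro _ ⟨τ, hτ, rfl⟩ _ ⟨κ, hκ, rfl⟩
  exact Tm.subst_congr fun x hx => Tm.eq_of_subst_eq (hτ ▸ hκ) ((hR p hp).2 x hx)

lemma IsTRS.finite_setOf_rew (hR : IsTRS R) (hfin : R.Finite) (s : Tm F ar ℕ) :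
    {v | Rew R s v}.Finite := by
  have hroot s := hfin.biUnion fun p hp => (hR.subsingleton_root_step hp s).finite
  induction s with
  | var x =>
    refine (hroot (.var x)).subset fun v hv => ?_
    rcases hv.root_or_arg with ⟨p, hp, τ, hs, hv⟩ | ⟨_, _, _, _, hs, -⟩
    · exact Set.mem_biUnion hp ⟨τ, hs, hv⟩
    · cases hs
  | fn f ts ih =>
    refine ((hroot (.fn f ts)).union (Set.finite_iUnion fun i =>
      (ih i).image fun t' => Tm.fn f (Function.update ts i t'))).subset fun v hv => ?_
    rcases hv.root_or_arg with ⟨p, hp, τ, hs, hv⟩ | ⟨g, us, i, t', hs, hst, rfl⟩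
    · exact .inl (Set.mem_biUnion hp ⟨τ, hs, hv⟩)
    · cases hs
      exact .inr (Set.mem_iUnion.mpr ⟨i, t', hst, rfl⟩)

lemma IsTRS.rew_fn_of_not_mem_definedSym (hR : IsTRS R) {f : F} (hf : f ∉ DefinedSym R)
    {us : Fin (ar f) → Tm F ar ℕ} {v : Tm F ar ℕ} (h : Rew R (Tm.fn f us) v) :
    ∃ i t', Rew R (us i) t' ∧ v = Tm.fn f (Function.update us i t') := by
  rcases h.root_or_arg with ⟨⟨l, r⟩, hp, τ, hs, -⟩ | ⟨g, ts, i, t', hs, hst, rfl⟩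
  · cases l with
    | var x => exact absurd rfl ((hR _ hp).1 x)
    | fn g ls =>
      cases hs
      exact absurd ⟨_, hp, ls, rfl⟩ hf
  · cases hs
    exact ⟨i, t', hst, rfl⟩

lemma acc_rew_arg {f : F} {us : Fin (ar f) → Tm F ar ℕ} (h : Acc (flip (Rew R)) (Tm.fn f us))
    (i : Fin (ar f)) : Acc (flip (Rew R)) (us i) := by
  let g t' := Tm.fn f (Function.update us i t')
  have hsub : Subrelation (flip (Rew R)) (InvImage (flip (Rew R)) g) := fun {a b} hst => by
    have := Rew.congr (ts := Function.update us i b) i (t' := a) (by rw [Function.update_self]; exact hst)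
    simpa [g, flip, InvImage, Function.update_idem] using this
  exact Subrelation.accessible hsub (InvImage.accessible g (by simpa [g] using h))

lemma IsTRS.isDH_fn (hR : IsTRS R) {f : F} (hf : f ∉ DefinedSym R)
    {us : Fin (ar f) → Tm F ar ℕ} {h : Fin (ar f) → ℕ} (hus : ∀ i, IsDH (Rew R) (us i) (h i)) :
    IsDH (Rew R) (Tm.fn f us) (∑ i, h i) := by
  induction hn : ∑ i, h i using Nat.strong_induction_on generalizing us h with
  | _ n ih =>
  have hupdate : ∀ i t' h', IsDH (Rew R) t' h' →
      ∀ j, IsDH (Rew R) (Function.update us i t' j) (Function.update h i h' j) := by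
    intro i t' h' ht' j
    rcases eq_or_ne j i with rfl | hj
    · simpa using ht'
    · simpa [hj] using hus j
  apply isDH_of_forall_rel
  · intro v hv
    obtain ⟨i, t', hst, rfl⟩ := hR.rew_fn_of_not_mem_definedSym hf hv
    obtain ⟨h', hlt, ht'⟩ := (hus i).exists_isDH_lt_of_rel hst
    have hsum := Finset.sum_update_add_apply h i h'
    exact ⟨_, by omega, ih _ (by omega) (hupdate i t' h' ht') rfl⟩
  · intro hpos
    obtain ⟨i, -, hi⟩ := Finset.sum_pos_iff.mp (hn ▸ hpos)
    obtain ⟨t', hst, ht'⟩ := (hus i).exists_rel_isDH_pred hi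
    have hsum := Finset.sum_update_add_apply h i (h i - 1)
    exact ⟨_, Rew.congr i hst, ih _ (by omega) (hupdate i t' _ ht') (by omega)⟩

lemma IsTRS.decomp_isDH_sum (hR : IsTRS R) (hfin : R.Finite) {X : Tm F ar ℕ → Prop}
    (hX : ∀ f ts, ¬ X (Tm.fn f ts) → f ∉ DefinedSym R) {t : Tm F ar ℕ}
    {L : List (Tm F ar ℕ)} (hdec : Decomp X t L) (σ : ℕ → Tm F ar ℕ)
    (hterm : Acc (flip (Rew R)) (t.subst σ)) :
    ∃ hs : List ℕ, List.Forall₂ (fun u h => IsDH (Rew R) (u.subst σ) h) L hs ∧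
      IsDH (Rew R) (t.subst σ) hs.sum := by
  induction hdec with
  | leaf _ =>
    obtain ⟨h, hdh⟩ := exists_isDH_of_acc (hR.finite_setOf_rew hfin) hterm
    exact ⟨[h], .cons hdh .nil, by simpa using hdh⟩
  | @node f ts L hnX _ ih =>
    choose hs hLhs hdh using fun i => ih i (acc_rew_arg hterm i)
    refine ⟨(List.ofFn hs).flatten, List.rel_flatten (List.forall₂_ofFn hLhs), ?_⟩
    simpa [Tm.subst, List.sum_flatten, List.sum_ofFn] using hR.isDH_fn (hX f ts hnX) hdh

end Rewriting

/-- Let `R` be a finite TRS with defined symbols `D`, let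
`t = C[t₁,…,tₙ]` where `C` contains no defined symbols and no variables and each `tᵢ`
has its root in `D ∪ V`, and let `σ` be a substitution with `tσ` terminating.  Then
`dh(tσ, →_R) = dh(t₁σ, →_R) + ⋯ + dh(tₙσ, →_R)` (all derivation heights being
well-defined natural numbers). -/
theorem dh_decomposition {F : Type} {ar : F → ℕ}
    (R : Finset (Tm F ar ℕ × Tm F ar ℕ))
    (hTRS : IsTRS (↑R : Set (Tm F ar ℕ × Tm F ar ℕ)))
    (t : Tm F ar ℕ) (L : List (Tm F ar ℕ))
    (hdec : Decomp
      (fun u => (∃ x, u = Tm.var x) ∨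
        (∃ f ts, u = Tm.fn f ts ∧ f ∈ DefinedSym (↑R : Set (Tm F ar ℕ × Tm F ar ℕ))))
      t L)
    (σ : ℕ → Tm F ar ℕ)
    (hterm : ¬ ∃ d : ℕ → Tm F ar ℕ, d 0 = t.subst σ ∧
      ∀ i, Rew (↑R : Set (Tm F ar ℕ × Tm F ar ℕ)) (d i) (d (i + 1))) :
    ∃ hs : List ℕ,
      List.Forall₂ (fun u h =>
        IsDH (Rew (↑R : Set (Tm F ar ℕ × Tm F ar ℕ))) (u.subst σ) h) L hs ∧
      IsDH (Rew (↑R : Set (Tm F ar ℕ × Tm F ar ℕ))) (t.subst σ) hs.sum :=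
  hTRS.decomp_isDH_sum R.finite_toSet (fun f ts hnX hf => hnX (.inr ⟨f, ts, rfl, hf⟩)) hdec σ
    (acc_of_not_exists_chain hterm)
end
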